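/- Let A = σuv* + E with ε = ‖E‖_C/(σ‖u‖_∞‖v‖_∞) ≤ 1/8. Suppose a_{ij} is simultaneously a maximal-in-modulus element of its row i and its column j of A. Set μ_u = |u_i|/‖u‖_∞ and μ_v = |v_j|/‖v‖_∞. Then either both μ_u ≤ μ₁ and μ_v ≤ μ₁, or both μ_u ≥ μ₂ and μ_v ≥ μ₂, where μ₁ = (1-sqrt(1-8ε))/2, μ₂ = (1+sqrt(1-8ε))/2. -/

import Mathlib

/-!
Let `i₀` be an index where `|u_{i₀}| = ‖u‖_∞`. Since `a_{ij}` dominates `a_{i₀j}` in its column and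
both entries are within `δ` of the rank-one entries, `σ |v_j| (‖u‖_∞ - |u_i|) ≤ 2δ`, i.e.
`μ_v (1 - μ_u) ≤ 2ε`; the row gives `μ_u (1 - μ_v) ≤ 2ε` in the same way. If, say, `μ_u ≤ μ_v`, then
`μ_v (1 - μ_v) ≤ 2ε`, so `μ_v` avoids the open interval between the roots `μ₁ < μ₂` of
`t (1 - t) = 2ε`. Either `μ_u ≤ μ_v ≤ μ₁`, or `μ_v ≥ μ₂` and then `μ₂ (1 - μ_u) ≤ 2ε = μ₁ μ₂`
forces `μ_u ≥ 1 - μ₁ = μ₂`.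
-/

theorem le_or_le_of_mul_one_sub_le {s ε t : ℝ} (hs : s ^ 2 = 1 - 8 * ε)
    (ht : t * (1 - t) ≤ 2 * ε) : t ≤ (1 - s) / 2 ∨ (1 + s) / 2 ≤ t := by
  have hprod : 0 ≤ (t - (1 - s) / 2) * (t - (1 + s) / 2) := by nlinarith
  rcases mul_nonneg_iff.1 hprod with ⟨-, h⟩ | ⟨h, -⟩
  · exact Or.inr (by linarith)
  · exact Or.inl (by linarith)

theorem dichotomy_of_mul_one_sub_le {s ε x y : ℝ} (hs : s ^ 2 = 1 - 8 * ε)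
    (hx0 : 0 ≤ x) (hy0 : 0 ≤ y) (hx : x ≤ 1) (hy : y ≤ 1)
    (hxy : x * (1 - y) ≤ 2 * ε) (hyx : y * (1 - x) ≤ 2 * ε) :
    (x ≤ (1 - s) / 2 ∧ y ≤ (1 - s) / 2) ∨ ((1 + s) / 2 ≤ x ∧ (1 + s) / 2 ≤ y) := by
  wlog hle : x ≤ y generalizing x y
  · have := this hy0 hx0 hy hx hyx hxy (by linarith)
    tauto
  have hyy : y * (1 - y) ≤ 2 * ε := by nlinarith
  rcases le_or_le_of_mul_one_sub_le hs hyy with hy' | hy'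
  · exact Or.inl ⟨hle.trans hy', hy'⟩
  · refine Or.inr ⟨?_, hy'⟩
    nlinarith [mul_le_mul_of_nonneg_right hy' (sub_nonneg.2 hx)]

theorem norm_sub_norm_le_of_norm_add_le {E : Type*} [SeminormedAddCommGroup E]
    {x y e f : E} {δ : ℝ} (h : ‖x + e‖ ≤ ‖y + f‖) (he : ‖e‖ ≤ δ) (hf : ‖f‖ ≤ δ) :
    ‖x‖ - ‖y‖ ≤ 2 * δ := by
  have hx := norm_sub_le (x + e) e
  rw [add_sub_cancel_right] at hx
  linarith [norm_add_le y f]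

theorem ciSup_norm_pos {ι E : Type*} [Finite ι] [NormedAddCommGroup E] {f : ι → E}
    (hf : f ≠ 0) : 0 < ⨆ i, ‖f i‖ := by
  obtain ⟨i, hi⟩ := Function.ne_iff.1 hf
  exact (norm_pos_iff.2 hi).trans_le (le_ciSup (Finite.bddAbove_range fun i => ‖f i‖) i)

theorem div_ciSup_norm_le_one {ι E : Type*} [Finite ι] [NormedAddCommGroup E] (f : ι → E)
    (i : ι) : ‖f i‖ / ⨆ i, ‖f i‖ ≤ 1 :=
  div_le_one_of_le₀ (le_ciSup (Finite.bddAbove_range fun i => ‖f i‖) i)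
    (Real.iSup_nonneg fun _ => norm_nonneg _)

theorem rankOne_add_norm_gap_le {ι κ : Type*} {σ δ : ℝ} (hσ : 0 ≤ σ) {u : ι → ℂ} {v : κ → ℂ}
    {A E : Matrix ι κ ℂ} (hA : ∀ i j, A i j = σ * u i * (starRingEnd ℂ) (v j) + E i j)
    (hE : ∀ i j, ‖E i j‖ ≤ δ) {i i' : ι} {j j' : κ} (h : ‖A i' j'‖ ≤ ‖A i j‖) :
    σ * (‖u i'‖ * ‖v j'‖ - ‖u i‖ * ‖v j‖) ≤ 2 * δ := by
  rw [hA, hA] at h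
  have := norm_sub_norm_le_of_norm_add_le h (hE i' j') (hE i j)
  simp only [norm_mul, Complex.norm_real, Complex.norm_conj, Real.norm_of_nonneg hσ] at this
  linarith

theorem div_mul_one_sub_div_le {σ δ U V a b : ℝ} (hσ : 0 < σ) (hU : 0 < U) (hV : 0 < V)
    (h : σ * (U * b - a * b) ≤ 2 * δ) : b / V * (1 - a / U) ≤ 2 * (δ / (σ * U * V)) := by
  rw [show b / V * (1 - a / U) = σ * (U * b - a * b) / (σ * U * V) by field_simp,
    ← mul_div_assoc]
  gcongr

theorem maxvol_stop_dichotomy_general {m n : ℕ}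
    (σ : ℝ) (hσ : 0 < σ)
    (u : Fin m → ℂ) (v : Fin n → ℂ)
    (hu : ∑ i, ‖u i‖ ^ 2 = 1) (hv : ∑ j, ‖v j‖ ^ 2 = 1)
    (A E : Matrix (Fin m) (Fin n) ℂ)
    (hA : ∀ i j, A i j = σ * u i * (starRingEnd ℂ) (v j) + E i j)
    (δ : ℝ) (hδ : δ = ⨆ p : Fin m × Fin n, ‖E p.1 p.2‖)
    (ε : ℝ)
    (hε : ε = δ / (σ * (⨆ i, ‖u i‖) * (⨆ j, ‖v j‖)))
    (hε8 : ε ≤ 1 / 8)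
    (i : Fin m) (j : Fin n)
    (hmaxcol : ∀ i', ‖A i' j‖ ≤ ‖A i j‖)
    (hmaxrow : ∀ j', ‖A i j'‖ ≤ ‖A i j‖)
    (μu μv : ℝ)
    (hμu : μu = ‖u i‖ / (⨆ i, ‖u i‖))
    (hμv : μv = ‖v j‖ / (⨆ j, ‖v j‖)) :
    (μu ≤ (1 - Real.sqrt (1 - 8 * ε)) / 2 ∧ μv ≤ (1 - Real.sqrt (1 - 8 * ε)) / 2) ∨
    ((1 + Real.sqrt (1 - 8 * ε)) / 2 ≤ μu ∧ (1 + Real.sqrt (1 - 8 * ε)) / 2 ≤ μv) := by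
  have : Nonempty (Fin m) := ⟨i⟩
  have : Nonempty (Fin n) := ⟨j⟩
  obtain ⟨i₀, hi₀⟩ := exists_eq_ciSup_of_finite (f := fun i => ‖u i‖)
  obtain ⟨j₀, hj₀⟩ := exists_eq_ciSup_of_finite (f := fun j => ‖v j‖)
  have hU : 0 < ⨆ i, ‖u i‖ := ciSup_norm_pos (by rintro rfl; simp at hu)
  have hV : 0 < ⨆ j, ‖v j‖ := ciSup_norm_pos (by rintro rfl; simp at hv)
  have hE : ∀ i j, ‖E i j‖ ≤ δ := fun i j =>
    hδ ▸ le_ciSup (f := fun p : Fin m × Fin n => ‖E p.1 p.2‖) (Finite.bddAbove_range _) (i, j)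
  have hcol := rankOne_add_norm_gap_le hσ.le hA hE (hmaxcol i₀)
  have hrow := rankOne_add_norm_gap_le hσ.le hA hE (hmaxrow j₀)
  rw [hi₀] at hcol
  rw [hj₀] at hrow
  subst hμu hμv hε
  refine dichotomy_of_mul_one_sub_le (Real.sq_sqrt (by linarith))
    (by positivity) (by positivity) (div_ciSup_norm_le_one u i) (div_ciSup_norm_le_one v j) ?_ ?_
  · rw [mul_right_comm σ]
    exact div_mul_one_sub_div_le hσ hV hU (by linarith)
  · exact div_mul_one_sub_div_le hσ hU hV hcol

/-- Stopping points of the rank-1 maxvol algorithm: if `A = σuv* + E` with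
`ε = ‖E‖_C/(σ‖u‖_∞‖v‖_∞) ≤ 1/8` and `a_{ij}` is maximal in modulus both in its row `i`
and its column `j`, then setting `μ_u = |u_i|/‖u‖_∞` and `μ_v = |v_j|/‖v‖_∞`, either
both `μ_u, μ_v ≤ μ₁` or both `μ_u, μ_v ≥ μ₂`. -/
theorem maxvol_stop_dichotomy {m n : ℕ} [NeZero m] [NeZero n]
    (σ : ℝ) (hσ : 0 < σ)
    (u : Fin m → ℂ) (v : Fin n → ℂ)
    (hu : ∑ i, ‖u i‖ ^ 2 = 1) (hv : ∑ j, ‖v j‖ ^ 2 = 1)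
    (A E : Matrix (Fin m) (Fin n) ℂ)
    (hA : ∀ i j, A i j = σ * u i * (starRingEnd ℂ) (v j) + E i j)
    (δ : ℝ) (hδ : δ = ⨆ p : Fin m × Fin n, ‖E p.1 p.2‖)
    (ε : ℝ)
    (hε : ε = δ / (σ * (⨆ i, ‖u i‖) * (⨆ j, ‖v j‖)))
    (hε8 : ε ≤ 1 / 8)
    (i : Fin m) (j : Fin n)
    (hmaxcol : ∀ i', ‖A i' j‖ ≤ ‖A i j‖)
    (hmaxrow : ∀ j', ‖A i j'‖ ≤ ‖A i j‖)
    (μu μv : ℝ)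
    (hμu : μu = ‖u i‖ / (⨆ i, ‖u i‖))
    (hμv : μv = ‖v j‖ / (⨆ j, ‖v j‖)) :
    (μu ≤ (1 - Real.sqrt (1 - 8 * ε)) / 2 ∧ μv ≤ (1 - Real.sqrt (1 - 8 * ε)) / 2) ∨
    ((1 + Real.sqrt (1 - 8 * ε)) / 2 ≤ μu ∧ (1 + Real.sqrt (1 - 8 * ε)) / 2 ≤ μv) :=
  maxvol_stop_dichotomy_general σ hσ u v hu hv A E hA δ hδ ε hε hε8 i j hmaxcol hmaxrow μu μv hμu
    hμv
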